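/- Let f₂ be the unique entire function with f₂(0) = 0 and f₂'(z) = 2·exp(−z²), let f₋₂ be the unique entire function with f₋₂(0) = 0 and f₋₂'(z) = −2·exp(−z²), and let x₀ > 0 be the unique positive real fixed point of f₂. Then f₋₂(x₀) = −x₀, f₋₂(−x₀) = x₀, f₋₂(x₀) ≠ x₀, and |(f₋₂ ∘ f₋₂)'(x₀)| < 1; i.e., x₀ is an attracting periodic point of f₋₂ of period 2. -/

import Mathlib

/-!
Since `g` and `-f` have the same derivative and agree at `0`, `g = -f`; since `f'` is even and
`f 0 = 0`, `f` is odd. Hence `g x₀ = -x₀` and `g (-x₀) = x₀`, and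
`|(g ∘ g)'(x₀)| = (2 exp (-x₀²))²`, which is `< 1` as soon as `x₀ ≥ 1` (because `e > 2`).
On the real axis `f x = ∫₀ˣ 2 exp (-t²)`, which is `≥ 4/3` at `1` and `< π` everywhere on `[0, ∞)`,
so `f` has a fixed point in `[1, 4]` by the intermediate value theorem; by uniqueness it is `x₀`.
-/

open Real intervalIntegral

theorem eq_of_deriv_eq {𝕜 F : Type*} [NontriviallyNormedField 𝕜] [IsRCLikeNormedField 𝕜]
    [NormedAddCommGroup F] [NormedSpace 𝕜 F] {f g : 𝕜 → F}
    (hf : Differentiable 𝕜 f) (hg : Differentiable 𝕜 g)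
    (hfg : ∀ x, deriv f x = deriv g x) (x : 𝕜) (hfgx : f x = g x) : f = g :=
  eq_of_fderiv_eq hf hg (fun y => by rw [← toSpanSingleton_deriv, ← toSpanSingleton_deriv, hfg])
    x hfgx

theorem odd_of_deriv_even {𝕜 F : Type*} [NontriviallyNormedField 𝕜]
    [IsRCLikeNormedField 𝕜] [NormedAddCommGroup F] [NormedSpace 𝕜 F] {f : 𝕜 → F}
    (hf : Differentiable 𝕜 f) (hf0 : f 0 = 0) (hf' : (deriv f).Even) : f.Odd := by
  have h := eq_of_deriv_eq (f := f) (g := fun w => -f (-w)) hf (hf.comp differentiable_neg).neg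
    (fun w => by rw [deriv.fun_neg, deriv_comp_neg, neg_neg, hf']) 0 (by simp [hf0])
  intro z
  simpa using congrFun h (-z)

noncomputable def gaussPrimitive (x : ℝ) : ℝ := ∫ t in (0 : ℝ)..x, 2 * exp (-t ^ 2)

theorem continuous_two_mul_exp_neg_sq : Continuous fun t : ℝ => 2 * exp (-t ^ 2) := by
  fun_prop

theorem continuous_gaussPrimitive : Continuous gaussPrimitive :=
  continuous_primitive (fun _ _ => continuous_two_mul_exp_neg_sq.intervalIntegrable _ _) 0

/-- Integrate `1 - t² ≤ exp (-t²)`. -/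
theorem four_thirds_le_gaussPrimitive_one : 4 / 3 ≤ gaussPrimitive 1 := by
  have hpoly : ∫ t in (0 : ℝ)..1, (2 - 2 * t ^ 2) = 4 / 3 := by
    rw [integral_sub intervalIntegrable_const
      ((by fun_prop : Continuous fun t : ℝ => 2 * t ^ 2).intervalIntegrable _ _)]
    simp only [integral_const_mul, integral_pow]
    norm_num
  rw [← hpoly, gaussPrimitive]
  refine integral_mono_on zero_le_one
    ((by fun_prop : Continuous fun t : ℝ => 2 - 2 * t ^ 2).intervalIntegrable _ _)
    (continuous_two_mul_exp_neg_sq.intervalIntegrable _ _) fun t _ => ?_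
  linarith [add_one_le_exp (-t ^ 2)]

/-- Integrate `exp (-t²) ≤ 1 / (1 + t²)`, whose primitive is `arctan`. -/
theorem gaussPrimitive_lt_pi {x : ℝ} (hx : 0 ≤ x) : gaussPrimitive x < π := by
  have hle : gaussPrimitive x ≤ ∫ t in (0 : ℝ)..x, 2 * (1 / (1 + t ^ 2)) := by
    refine integral_mono_on hx (continuous_two_mul_exp_neg_sq.intervalIntegrable _ _)
      (Continuous.intervalIntegrable (by fun_prop (disch := intro t; positivity)) _ _)
      fun t _ => ?_
    rw [exp_neg, ← one_div]
    gcongr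
    linarith [add_one_le_exp (t ^ 2)]
  rw [integral_const_mul, integral_one_div_one_add_sq, arctan_zero, sub_zero] at hle
  linarith [arctan_lt_pi_div_two x]

theorem exists_mem_Icc_gaussPrimitive_eq_self :
    ∃ y ∈ Set.Icc (1 : ℝ) 4, gaussPrimitive y = y := by
  obtain ⟨y, hy, hy0⟩ := intermediate_value_Icc' (by norm_num : (1 : ℝ) ≤ 4)
    (continuous_gaussPrimitive.sub continuous_id).continuousOn
    (show (0 : ℝ) ∈ Set.Icc (gaussPrimitive 4 - 4) (gaussPrimitive 1 - 1) from
      ⟨by linarith [gaussPrimitive_lt_pi (by norm_num : (0 : ℝ) ≤ 4), pi_lt_four],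
        by linarith [four_thirds_le_gaussPrimitive_one]⟩)
  exact ⟨y, hy, sub_eq_zero.mp hy0⟩

theorem apply_ofReal_eq_gaussPrimitive {f : ℂ → ℂ} (hf : Differentiable ℂ f) (hf0 : f 0 = 0)
    (hf' : ∀ z, deriv f z = 2 * Complex.exp (-z ^ 2)) (x : ℝ) : f x = gaussPrimitive x := by
  have hderiv : ∀ t ∈ Set.uIcc (0 : ℝ) x,
      HasDerivAt (fun s : ℝ => f s) ((2 * exp (-t ^ 2) : ℝ) : ℂ) t := fun t _ => by
    convert (hf t).hasDerivAt.comp_ofReal using 1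
    rw [hf']
    push_cast
    rfl
  rw [gaussPrimitive, ← integral_ofReal, integral_eq_sub_of_hasDerivAt hderiv
    ((by fun_prop : Continuous fun t : ℝ => ((2 * exp (-t ^ 2) : ℝ) : ℂ)).intervalIntegrable _ _),
    Complex.ofReal_zero, hf0, sub_zero]

theorem two_mul_exp_neg_sq_lt_one {x : ℝ} (hx : 1 ≤ x) : 2 * exp (-x ^ 2) < 1 := by
  have : exp (-x ^ 2) ≤ exp (-1) := exp_le_exp.mpr (by nlinarith)
  have : exp (-1) < 1 / 2 := by
    rw [exp_neg, ← one_div]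
    exact one_div_lt_one_div_of_lt two_pos exp_one_gt_two
  linarith

theorem norm_deriv_ofReal_of_deriv_eq {g : ℂ → ℂ}
    (hg' : ∀ z, deriv g z = -2 * Complex.exp (-z ^ 2)) (x : ℝ) :
    ‖deriv g x‖ = 2 * exp (-x ^ 2) := by
  rw [hg', norm_mul, ← Complex.ofReal_pow, ← Complex.ofReal_neg, Complex.norm_exp_ofReal]
  norm_num

theorem stmt12_general (f g : ℂ → ℂ)
    (hf : Differentiable ℂ f) (hf0 : f 0 = 0)
    (hf' : ∀ z : ℂ, deriv f z = 2 * Complex.exp (-z ^ 2))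
    (hg : Differentiable ℂ g) (hg0 : g 0 = 0)
    (hg' : ∀ z : ℂ, deriv g z = -2 * Complex.exp (-z ^ 2))
    (x₀ : ℝ) (hfix : f (x₀ : ℂ) = (x₀ : ℂ))
    (huniq : ∀ y : ℝ, 0 < y → f (y : ℂ) = (y : ℂ) → y = x₀) :
    g (x₀ : ℂ) = -(x₀ : ℂ) ∧ g (-(x₀ : ℂ)) = (x₀ : ℂ) ∧
    g (x₀ : ℂ) ≠ (x₀ : ℂ) ∧ ‖deriv (g ∘ g) (x₀ : ℂ)‖ < 1 := by
  have hg_eq : g = -f :=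
    eq_of_deriv_eq hg hf.neg (fun z => by rw [hg', deriv.neg, hf']; ring) 0 (by simp [hf0, hg0])
  have hf_odd : f.Odd := odd_of_deriv_even hf hf0 fun z => by rw [hf', hf', neg_sq]
  have hx₀ : 1 ≤ x₀ := by
    obtain ⟨y, hy, hyfix⟩ := exists_mem_Icc_gaussPrimitive_eq_self
    have hfy : f y = y := by rw [apply_ofReal_eq_gaussPrimitive hf hf0 hf', hyfix]
    exact huniq y (by linarith [hy.1]) hfy ▸ hy.1
  have hgx₀ : g x₀ = -x₀ := by rw [hg_eq, Pi.neg_apply, hfix]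
  refine ⟨hgx₀, by rw [hg_eq, Pi.neg_apply, hf_odd, hfix, neg_neg], ?_, ?_⟩
  · rw [hgx₀, Ne, neg_eq_self, Complex.ofReal_eq_zero]
    linarith
  · have hcomp : deriv (g ∘ g) x₀ = deriv g ((-x₀ : ℝ) : ℂ) * deriv g x₀ := by
      rw [deriv_comp _ (hg _) (hg _), hgx₀, Complex.ofReal_neg]
    have hlt := two_mul_exp_neg_sq_lt_one hx₀
    rw [hcomp, norm_mul, norm_deriv_ofReal_of_deriv_eq hg', norm_deriv_ofReal_of_deriv_eq hg',
      neg_sq]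
    exact mul_lt_one_of_nonneg_of_lt_one_left (by positivity) hlt hlt.le

theorem stmt12 (f g : ℂ → ℂ)
    (hf : Differentiable ℂ f) (hf0 : f 0 = 0)
    (hf' : ∀ z : ℂ, deriv f z = 2 * Complex.exp (-z ^ 2))
    (hg : Differentiable ℂ g) (hg0 : g 0 = 0)
    (hg' : ∀ z : ℂ, deriv g z = -2 * Complex.exp (-z ^ 2))
    (x₀ : ℝ) (hx₀ : 0 < x₀) (hfix : f (x₀ : ℂ) = (x₀ : ℂ))
    (huniq : ∀ y : ℝ, 0 < y → f (y : ℂ) = (y : ℂ) → y = x₀) :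
    g (x₀ : ℂ) = -(x₀ : ℂ) ∧ g (-(x₀ : ℂ)) = (x₀ : ℂ) ∧
    g (x₀ : ℂ) ≠ (x₀ : ℂ) ∧ ‖deriv (g ∘ g) (x₀ : ℂ)‖ < 1 :=
  stmt12_general f g hf hf0 hf' hg hg0 hg' x₀ hfix huniq
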